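/- arXiv:2412.00003 — 2 statements merged into one kernel-verified Lean document; each statement's English description precedes it below -/
import Mathlib

section
/- Let A ∈ M_n(ℝ). Then A is an inverse M-matrix whose inverse has the bdsw structure if and only if A > 0 (entrywise), A has the inverse cyclic property, and d - c > 0 where d is the product of the diagonal entries and c the cyclic product. -/
open Matrix Finset

/-- A matrix (of order ≥ 2) has the *inverse cyclic property* if all its diagonal
entries are nonzero and the three cyclic entry conditions hold. -/
def InvCyclic {n : ℕ} (A : Matrix (Fin (n + 2)) (Fin (n + 2)) ℝ) : Prop :=
  (∀ i, A i i ≠ 0) ∧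
  (∀ i k j : Fin (n + 2), i < k → k < j → A i j = A i k * A k j / A k k) ∧
  (∀ i j : Fin (n + 2), j < i → i ≠ Fin.last (n + 1) →
    A i j = A i (Fin.last (n + 1)) * A (Fin.last (n + 1)) j /
      A (Fin.last (n + 1)) (Fin.last (n + 1))) ∧
  (∀ j : Fin (n + 2), j < Fin.last (n + 1) →
    A (Fin.last (n + 1)) j = A (Fin.last (n + 1)) 0 * A 0 j / A 0 0)

/-- `d`, the product of the diagonal entries. -/
def diagProd {n : ℕ} (A : Matrix (Fin (n + 2)) (Fin (n + 2)) ℝ) : ℝ := ∏ i, A i i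

/-- `c`, the cyclic product `a₁₂a₂₃⋯a_{(n-1)n}a_{n1}`. -/
def cycProd {n : ℕ} (A : Matrix (Fin (n + 2)) (Fin (n + 2)) ℝ) : ℝ :=
  ∏ i : Fin (n + 2), A i (i + 1)
/-- A *bi-diagonal south-west* (bdsw) matrix: the diagonal, the super diagonal and the
south-west corner entry are nonzero, and all other entries are zero. -/
def Bdsw {n : ℕ} (B : Matrix (Fin (n + 2)) (Fin (n + 2)) ℝ) : Prop :=
  (∀ i, B i i ≠ 0) ∧
  (∀ i j : Fin (n + 2), (j : ℕ) = (i : ℕ) + 1 → B i j ≠ 0) ∧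
  (B (Fin.last (n + 1)) 0 ≠ 0) ∧
  (∀ i j : Fin (n + 2), i ≠ j → (j : ℕ) ≠ (i : ℕ) + 1 →
    ¬(i = Fin.last (n + 1) ∧ j = 0) → B i j = 0)

/-!
If `B = A⁻¹` is bdsw, the equations `(B * A) i j = 0` for `i ≠ j` say that off the diagonal
`A i j = L i * A (i + 1) j` with `L i = -B i (i + 1) / B i i > 0`, indices read cyclically.
Iterating along the cycle gives `A i j = (∏ of L along the arc from i to j) * A j j`, whence
positivity and all the inverse cyclic identities, while `(B * A) i i = 1` becomes
`B i i * A i i * (1 - ρ) = 1` with `ρ = ∏ L = c / d`. Conversely the inverse cyclic property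
yields the same chain relation with `L i = A i (i + 1) / A (i + 1) (i + 1)`, and the bdsw matrix
with rows `(1, -L i) / ((1 - ρ) A i i)` is then a left inverse of `A`.
-/

open scoped Fin.NatCast Fin.CommRing

lemma Fin.eq_add_one_iff_val {n : ℕ} {i j : Fin (n + 1)} :
    j = i + 1 ↔ (j : ℕ) = i + 1 ∨ (i = Fin.last n ∧ j = 0) := by
  rw [Fin.ext_iff, Fin.val_add_one]
  split_ifs with hi
  · subst hi
    have := j.isLt
    simp only [Fin.val_zero, Fin.val_last, true_and, Fin.ext_iff]
    omega
  · simp [hi]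

lemma Fin.add_one_ne_self {n : ℕ} (i : Fin (n + 2)) : i + 1 ≠ i := fun h => by
  simpa using congrArg (· - i) h

section CyclicChain

variable {n : ℕ}

def arcProd (L : Fin (n + 2) → ℝ) (i : Fin (n + 2)) (m : ℕ) : ℝ :=
  ∏ l ∈ range m, L (i + l)

lemma arcProd_add (L : Fin (n + 2) → ℝ) (i : Fin (n + 2)) (m k : ℕ) :
    arcProd L i (m + k) = arcProd L i m * arcProd L (i + m) k := by
  simp only [arcProd, prod_range_add, Nat.cast_add, add_assoc]

lemma arcProd_succ (L : Fin (n + 2) → ℝ) (i : Fin (n + 2)) (m : ℕ) :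
    arcProd L i (m + 1) = L i * arcProd L (i + 1) m := by
  rw [add_comm, arcProd_add]
  simp [arcProd]

lemma arcProd_full (L : Fin (n + 2) → ℝ) (i : Fin (n + 2)) :
    arcProd L i (n + 2) = ∏ k, L k := by
  rw [arcProd, ← Fin.prod_univ_eq_prod_range (fun l : ℕ => L (i + l))]
  exact Fintype.prod_equiv (Equiv.addLeft i) _ _ (fun k => by simp)

lemma arcProd_pos {L : Fin (n + 2) → ℝ} (hL : ∀ i, 0 < L i) (i : Fin (n + 2)) (m : ℕ) :
    0 < arcProd L i m :=
  prod_pos fun _ _ => hL _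

def IsCyclicChain (A : Matrix (Fin (n + 2)) (Fin (n + 2)) ℝ) (L : Fin (n + 2) → ℝ) : Prop :=
  ∀ i j, i ≠ j → A i j = L i * A (i + 1) j

variable {A : Matrix (Fin (n + 2)) (Fin (n + 2)) ℝ} {L : Fin (n + 2) → ℝ}

namespace IsCyclicChain

lemma apply_eq_arcProd_mul (hA : IsCyclicChain A L) (i j : Fin (n + 2)) :
    A i j = arcProd L i (j - i : Fin (n + 2)) * A j j := by
  suffices ∀ m i, ((j - i : Fin (n + 2)) : ℕ) = m → A i j = arcProd L i m * A j j from
    this _ i rfl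
  intro m
  induction m with
  | zero =>
    intro i hm
    rw [Fin.val_eq_zero_iff, sub_eq_zero] at hm
    simp [hm, arcProd]
  | succ m ih =>
    intro i hm
    have hji : j - i ≠ 0 := fun h => by simp [h] at hm
    have hij : i ≠ j := fun h => hji (by rw [h, sub_self])
    have hm' : ((j - (i + 1) : Fin (n + 2)) : ℕ) = m := by
      rw [← sub_sub, Fin.val_sub_one_of_ne_zero hji, hm, Nat.add_sub_cancel]
    rw [hA i j hij, ih (i + 1) hm', arcProd_succ, mul_assoc]

lemma pos (hA : IsCyclicChain A L) (hL : ∀ i, 0 < L i) (hdiag : ∀ i, 0 < A i i)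
    (i j : Fin (n + 2)) : 0 < A i j := by
  rw [hA.apply_eq_arcProd_mul]
  exact mul_pos (arcProd_pos hL _ _) (hdiag j)

lemma mul_diag_eq (hA : IsCyclicChain A L) {i k j : Fin (n + 2)}
    (hk : ((k - i : Fin (n + 2)) : ℕ) ≤ (j - i : Fin (n + 2))) :
    A i j * A k k = A i k * A k j := by
  have hsplit : ((j - i : Fin (n + 2)) : ℕ) = (k - i : Fin (n + 2)) + (j - k : Fin (n + 2)) := by
    have : j - k = (j - i) - (k - i) := by ring
    rw [this, Fin.sub_val_of_le (Fin.le_def.mpr hk)]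
    omega
  rw [hA.apply_eq_arcProd_mul i j, hA.apply_eq_arcProd_mul i k, hA.apply_eq_arcProd_mul k j,
    hsplit, arcProd_add, Fin.cast_val_eq_self, add_sub_cancel]
  ring

lemma mul_apply_add_one_self (hA : IsCyclicChain A L) (i : Fin (n + 2)) :
    L i * A (i + 1) i = (∏ k, L k) * A i i := by
  have hval : ((i - (i + 1) : Fin (n + 2)) : ℕ) = n + 1 := by
    rw [sub_add_eq_sub_sub, sub_self, zero_sub, Fin.coe_neg_one]
  rw [hA.apply_eq_arcProd_mul, hval, ← mul_assoc, ← arcProd_succ, arcProd_full]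

lemma cycProd_eq (hA : IsCyclicChain A L) : cycProd A = (∏ k, L k) * diagProd A := by
  rw [cycProd, diagProd, prod_congr rfl fun i _ => hA i (i + 1) (Fin.add_one_ne_self i).symm,
    prod_mul_distrib]
  congr 1
  exact Fintype.prod_equiv (Equiv.addRight 1) _ _ fun _ => rfl

lemma invCyclic (hA : IsCyclicChain A L) (hdiag : ∀ i, A i i ≠ 0) : InvCyclic A := by
  refine ⟨hdiag, fun i k j hik hkj => ?_, fun i j hji hi => ?_, fun j hj => ?_⟩ <;>
    refine eq_div_of_mul_eq (hdiag _) (hA.mul_diag_eq ?_)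
  · rw [Fin.sub_val_of_le hik.le, Fin.sub_val_of_le (hik.trans hkj).le]
    exact Nat.sub_le_sub_right (Fin.le_def.mp hkj.le) _
  · rw [Fin.sub_val_of_le (Fin.le_last i), Fin.coe_sub_iff_lt.mpr hji]
    simp only [Fin.val_last]
    omega
  · rw [Fin.coe_sub_iff_lt.mpr (Fin.last_pos), Fin.coe_sub_iff_lt.mpr hj]
    simp only [Fin.val_last, Fin.val_zero]
    omega

end IsCyclicChain

lemma InvCyclic.isCyclicChain (hA : InvCyclic A) :
    IsCyclicChain A fun i => A i (i + 1) / A (i + 1) (i + 1) := by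
  obtain ⟨hdiag, hlt, hgt, hlast⟩ := hA
  intro i j hij
  dsimp only
  rcases (Fin.le_last i).lt_or_eq with hi | rfl
  · have hi1 : ((i + 1 : Fin (n + 2)) : ℕ) = i + 1 := Fin.val_add_one_of_lt hi
    have hii1 : i < i + 1 := Fin.lt_def.mpr (by omega)
    rcases lt_trichotomy (i + 1) j with h | rfl | h
    · rw [hlt i (i + 1) j hii1 h]
      field_simp
    · exact (div_mul_cancel₀ _ (hdiag _)).symm
    · have hji : j < i := Fin.lt_def.mpr (by
        have := Fin.lt_def.mp h
        have : (j : ℕ) ≠ i := fun h' => hij (Fin.ext h'.symm)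
        omega)
      rw [hgt i j hji hi.ne]
      rcases (Fin.le_last (i + 1)).lt_or_eq with hi1l | hi1l
      · rw [hlt i (i + 1) _ hii1 hi1l, hgt (i + 1) j (hji.trans hii1) hi1l.ne]
        field_simp
      · rw [hi1l]
        ring
  · rw [hlast j (lt_of_le_of_ne (Fin.le_last j) (Ne.symm hij))]
    simp only [Fin.last_add_one]
    ring

end CyclicChain

section CyclicBidiagonal

variable {n : ℕ}

/-- For the last row, `(i, i + 1)` is the south-west corner. -/
def cycBidiag (a b : Fin (n + 2) → ℝ) : Matrix (Fin (n + 2)) (Fin (n + 2)) ℝ :=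
  fun i j => if j = i then a i else if j = i + 1 then b i else 0

lemma cycBidiag_mul_apply (a b : Fin (n + 2) → ℝ) (A : Matrix (Fin (n + 2)) (Fin (n + 2)) ℝ)
    (i j : Fin (n + 2)) : (cycBidiag a b * A) i j = a i * A i j + b i * A (i + 1) j := by
  rw [mul_apply, Fintype.sum_eq_add i (i + 1) (Fin.add_one_ne_self i).symm]
  · simp [cycBidiag]
  · intro k hk
    simp [cycBidiag, hk.1, hk.2]

lemma cycBidiag_apply_nonpos {a b : Fin (n + 2) → ℝ} (hb : ∀ i, b i ≤ 0) {i j : Fin (n + 2)}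
    (hij : i ≠ j) : cycBidiag a b i j ≤ 0 := by
  simp only [cycBidiag, if_neg hij.symm]
  split_ifs
  exacts [hb i, le_rfl]

lemma bdsw_cycBidiag {a b : Fin (n + 2) → ℝ} (ha : ∀ i, a i ≠ 0) (hb : ∀ i, b i ≠ 0) :
    Bdsw (cycBidiag a b) := by
  refine ⟨fun i => by simpa [cycBidiag] using ha i, fun i j hj => ?_, ?_, fun i j hij hj hc => ?_⟩
  · have hji : j ≠ i := fun h => by simp [h] at hj
    simpa [cycBidiag, hji, Fin.eq_add_one_iff_val.mpr (Or.inl hj)] using hb i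
  · simpa [cycBidiag, Fin.last_pos.ne] using hb _
  · have hj1 : j ≠ i + 1 := fun h => (Fin.eq_add_one_iff_val.mp h).elim hj hc
    simp only [cycBidiag, if_neg (Ne.symm hij), if_neg hj1]

lemma Bdsw.eq_cycBidiag {B : Matrix (Fin (n + 2)) (Fin (n + 2)) ℝ} (hB : Bdsw B) :
    B = cycBidiag (fun i => B i i) (fun i => B i (i + 1)) := by
  ext i j
  unfold cycBidiag
  split_ifs with h1 h2
  · rw [h1]
  · rw [h2]
  · exact hB.2.2.2 i j (Ne.symm h1) (fun h => h2 (Fin.eq_add_one_iff_val.mpr (Or.inl h)))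
      fun h => h2 (Fin.eq_add_one_iff_val.mpr (Or.inr h))

lemma Bdsw.apply_add_one_ne_zero {B : Matrix (Fin (n + 2)) (Fin (n + 2)) ℝ} (hB : Bdsw B)
    (i : Fin (n + 2)) : B i (i + 1) ≠ 0 := by
  rcases Fin.eq_add_one_iff_val.mp (rfl : i + 1 = i + 1) with h | ⟨rfl, h⟩
  · exact hB.2.1 i _ h
  · rw [h]
    exact hB.2.2.1

end CyclicBidiagonal

section InverseMMatrix

variable {n : ℕ} {A : Matrix (Fin (n + 2)) (Fin (n + 2)) ℝ} {L : Fin (n + 2) → ℝ}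

lemma IsCyclicChain.cycBidiag_mul (hA : IsCyclicChain A L) (c : Fin (n + 2) → ℝ) :
    cycBidiag c (fun i => -(c i * L i)) * A = diagonal fun i => c i * (1 - ∏ k, L k) * A i i := by
  ext i j
  rw [cycBidiag_mul_apply]
  rcases eq_or_ne i j with rfl | hij
  · rw [diagonal_apply_eq]
    linear_combination (-c i) * hA.mul_apply_add_one_self i
  · rw [diagonal_apply_ne _ hij, hA i j hij]
    ring

lemma isCyclicChain_of_cycBidiag_mul_eq_one {a b : Fin (n + 2) → ℝ}
    (h : cycBidiag a b * A = 1) (ha : ∀ i, a i ≠ 0) : IsCyclicChain A fun i => -b i / a i := by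
  intro i j hij
  have hij' := congrFun (congrFun h i) j
  rw [cycBidiag_mul_apply, one_apply_ne hij] at hij'
  field_simp [ha i]
  linear_combination hij'

theorem pos_invCyclic_of_inv_bdsw (hdet : A.det ≠ 0) (hZ : ∀ i j, i ≠ j → A⁻¹ i j ≤ 0)
    (hA : ∀ i j, 0 ≤ A i j) (hB : Bdsw A⁻¹) :
    (∀ i j, 0 < A i j) ∧ InvCyclic A ∧ 0 < diagProd A - cycProd A := by
  set a := fun i => A⁻¹ i i
  set b := fun i => A⁻¹ i (i + 1)
  have hBA : cycBidiag a b * A = 1 :=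
    hB.eq_cycBidiag ▸ nonsing_inv_mul A (isUnit_iff_ne_zero.mpr hdet)
  have hb : ∀ i, b i < 0 := fun i =>
    (hZ i (i + 1) (Fin.add_one_ne_self i).symm).lt_of_ne (hB.apply_add_one_ne_zero i)
  have hdiag : ∀ i, 1 ≤ a i * A i i := fun i => by
    have hii := congrFun (congrFun hBA i) i
    rw [cycBidiag_mul_apply, one_apply_eq] at hii
    nlinarith [mul_nonpos_of_nonpos_of_nonneg (hb i).le (hA (i + 1) i)]
  have hApos : ∀ i, 0 < A i i := fun i =>
    (hA i i).lt_of_ne fun h => by linarith [h ▸ hdiag i, mul_zero (a i)]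
  have hapos : ∀ i, 0 < a i := fun i => pos_of_mul_pos_left (one_pos.trans_le (hdiag i)) (hA i i)
  have hchain := isCyclicChain_of_cycBidiag_mul_eq_one hBA fun i => (hapos i).ne'
  have hρ : 0 < 1 - ∏ k, -b k / a k := by
    have h := hchain.cycBidiag_mul a
    have hab : (fun i => -(a i * (-b i / a i))) = b := funext fun i => by field_simp [(hapos i).ne']
    rw [hab, hBA] at h
    have h00 := congrFun (congrFun h 0) 0
    rw [one_apply_eq, diagonal_apply_eq] at h00
    nlinarith [mul_pos (hapos 0) (hApos 0)]
  refine ⟨hchain.pos (fun i => div_pos (neg_pos.mpr (hb i)) (hapos i)) hApos,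
    hchain.invCyclic fun i => (hApos i).ne', ?_⟩
  rw [hchain.cycProd_eq, ← one_sub_mul]
  exact mul_pos hρ (prod_pos fun i _ => hApos i)

theorem inv_bdsw_of_pos_invCyclic (hpos : ∀ i j, 0 < A i j) (hIC : InvCyclic A)
    (hdc : 0 < diagProd A - cycProd A) :
    A.det ≠ 0 ∧ (∀ i j, i ≠ j → A⁻¹ i j ≤ 0) ∧ (∀ i j, 0 ≤ A i j) ∧ Bdsw A⁻¹ := by
  have hchain := hIC.isCyclicChain
  set L := fun i => A i (i + 1) / A (i + 1) (i + 1)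
  have hL : ∀ i, 0 < L i := fun i => div_pos (hpos _ _) (hpos _ _)
  have hρ : 0 < 1 - ∏ k, L k := by
    rw [hchain.cycProd_eq, ← one_sub_mul] at hdc
    exact pos_of_mul_pos_left hdc (prod_pos fun i _ => hpos i i).le
  set c := fun i => ((1 - ∏ k, L k) * A i i)⁻¹
  have hc : ∀ i, 0 < c i := fun i => inv_pos.mpr (mul_pos hρ (hpos i i))
  have hBA : cycBidiag c (fun i => -(c i * L i)) * A = 1 := by
    rw [hchain.cycBidiag_mul, ← diagonal_one]
    congr 1
    funext i
    rw [mul_assoc]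
    exact inv_mul_cancel₀ (mul_pos hρ (hpos i i)).ne'
  rw [inv_eq_left_inv hBA]
  refine ⟨det_ne_zero_of_left_inverse hBA,
    fun i j hij => cycBidiag_apply_nonpos (fun i => ?_) hij, fun i j => (hpos i j).le,
    bdsw_cycBidiag (fun i => (hc i).ne') fun i => ?_⟩
  · exact neg_nonpos.mpr (mul_pos (hc i) (hL i)).le
  · exact neg_ne_zero.mpr (mul_pos (hc i) (hL i)).ne'

end InverseMMatrix

theorem stmt10 {n : ℕ} (A : Matrix (Fin (n + 2)) (Fin (n + 2)) ℝ) :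
    -- `A` is an inverse `M`-matrix (i.e. `A⁻¹` is a nonsingular `Z`-matrix whose
    -- inverse `A` is entrywise nonnegative) such that `A⁻¹` has the bdsw structure
    (A.det ≠ 0 ∧ (∀ i j, i ≠ j → A⁻¹ i j ≤ 0) ∧ (∀ i j, 0 ≤ A i j) ∧ Bdsw A⁻¹) ↔
    ((∀ i j, 0 < A i j) ∧ InvCyclic A ∧ 0 < diagProd A - cycProd A) :=
  ⟨fun ⟨hdet, hZ, hA, hB⟩ => pos_invCyclic_of_inv_bdsw hdet hZ hA hB,
    fun ⟨hpos, hIC, hdc⟩ => inv_bdsw_of_pos_invCyclic hpos hIC hdc⟩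
end

section
/- Let A ∈ M_n(ℝ) with n even. Then A^{-1} exists, is a Z-matrix with A < 0 entrywise (equivalently A^{-1} is an N-matrix by the characterization A^{-1} < 0 ⟺ entrywise negative inverse), and A^{-1} has the bdsw structure, if and only if A < 0 entrywise, A has the inverse cyclic property, and d - c < 0. -/
open Matrix Finset

/-!
If `B = A⁻¹` is supported on the cyclic bidiagonal pattern, column `j` of `A * B = 1` says that
columns `j - 1` and `j` of `A` are proportional away from row `j`. For a matrix with nonzero
entries this proportionality is equivalent to the inverse cyclic property, by chaining it along
consecutive columns. Conversely it determines the inverse: the relations force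
`d a_{j,j-1} a_{j-1,j} = c a_{jj} a_{j-1,j-1}`, whence `(A⁻¹)_{jj} = d / ((d - c) a_{jj})` and
`(A⁻¹)_{j-1,j} = -d a_{j-1,j} / ((d - c) a_{j-1,j-1} a_{jj})`. Since `n` is even and `A < 0`,
`d > 0`, so these entries have the sign pattern of a `Z`-matrix exactly when `d - c < 0`.
-/

namespace Fin

lemma zero_sub_one_eq_last (n : ℕ) : (0 : Fin (n + 2)) - 1 = Fin.last (n + 1) := by
  rw [sub_eq_iff_eq_add, Fin.last_add_one]

lemma eq_sub_one_iff {n : ℕ} {i j : Fin (n + 2)} :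
    i = j - 1 ↔ (j : ℕ) = i + 1 ∨ (i = Fin.last (n + 1) ∧ j = 0) := by
  by_cases hj : j = 0
  · subst hj
    rw [zero_sub_one_eq_last]
    simp
  · have hj' : (j : ℕ) ≠ 0 := Fin.val_ne_zero_iff.2 hj
    rw [Fin.ext_iff, val_sub_one_of_ne_zero hj]
    simp only [hj, and_false, or_false]
    omega

end Fin

variable {n : ℕ}

/-- The support pattern of a bdsw matrix; here `j - 1` is taken modulo `n + 2`. -/
def SupportedOnCyclicBidiag (B : Matrix (Fin (n + 2)) (Fin (n + 2)) ℝ) : Prop :=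
  ∀ k j, k ≠ j → k ≠ j - 1 → B k j = 0

lemma bdsw_iff {B : Matrix (Fin (n + 2)) (Fin (n + 2)) ℝ} :
    Bdsw B ↔ (∀ j, B j j ≠ 0) ∧ (∀ j, B (j - 1) j ≠ 0) ∧ SupportedOnCyclicBidiag B := by
  constructor
  · rintro ⟨hdiag, hsucc, hcorner, hzero⟩
    refine ⟨hdiag, fun j => ?_, fun k j hkj hk => hzero k j hkj ?_ ?_⟩
    · rcases Fin.eq_sub_one_iff.1 (rfl : j - 1 = j - 1) with h | ⟨hlast, rfl⟩
      · exact hsucc _ _ h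
      · rwa [hlast]
    · exact fun h => hk (Fin.eq_sub_one_iff.2 (Or.inl h))
    · exact fun h => hk (Fin.eq_sub_one_iff.2 (Or.inr h))
  · rintro ⟨hdiag, hpred, hsupp⟩
    refine ⟨hdiag, fun i j h => ?_, ?_, fun i j hij hsucc hcorner => hsupp i j hij ?_⟩
    · rw [Fin.eq_sub_one_iff.2 (Or.inl h)]
      exact hpred j
    · rw [← Fin.zero_sub_one_eq_last]
      exact hpred 0
    · rw [Ne, Fin.eq_sub_one_iff]
      tauto

lemma mul_apply_of_supportedOnCyclicBidiag {A B : Matrix (Fin (n + 2)) (Fin (n + 2)) ℝ}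
    (hB : SupportedOnCyclicBidiag B) (i j : Fin (n + 2)) :
    (A * B) i j = A i j * B j j + A i (j - 1) * B (j - 1) j := by
  rw [mul_apply, Fintype.sum_eq_add j (j - 1) (by simp : j - 1 ≠ j).symm]
  rintro k ⟨hkj, hk⟩
  rw [hB k j hkj hk, mul_zero]

def ConsecColsProportional (A : Matrix (Fin (n + 2)) (Fin (n + 2)) ℝ) : Prop :=
  ∀ x y j, x ≠ j → y ≠ j → A x j * A y (j - 1) = A y j * A x (j - 1)

lemma consecColsProportional_of_mul_eq_one {A B : Matrix (Fin (n + 2)) (Fin (n + 2)) ℝ}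
    (hAB : A * B = 1) (hB : SupportedOnCyclicBidiag B) (hdiag : ∀ j, B j j ≠ 0) :
    ConsecColsProportional A := by
  have hcol : ∀ x j, x ≠ j → A x j * B j j + A x (j - 1) * B (j - 1) j = 0 := fun x j hxj => by
    rw [← mul_apply_of_supportedOnCyclicBidiag hB, hAB, one_apply_ne hxj]
  intro x y j hx hy
  apply mul_right_cancel₀ (hdiag j)
  linear_combination A y (j - 1) * hcol x j hx - A x (j - 1) * hcol y j hy

lemma prod_apply_sub_one_sub_one (A : Matrix (Fin (n + 2)) (Fin (n + 2)) ℝ) :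
    ∏ l, A (l - 1) (l - 1) = diagProd A :=
  (Equiv.subRight 1).prod_comp fun l => A l l

lemma prod_apply_sub_one_self (A : Matrix (Fin (n + 2)) (Fin (n + 2)) ℝ) :
    ∏ l, A (l - 1) l = cycProd A := by
  rw [cycProd]
  exact Fintype.prod_equiv (Equiv.subRight 1) _ _ fun l => by simp

namespace ConsecColsProportional

variable {A : Matrix (Fin (n + 2)) (Fin (n + 2)) ℝ}

/-- Multiplying the relations of row `j` over all columns `l ≠ j` telescopes: the remaining
factors reindex to `diagProd A` and `cycProd A`. -/
lemma diagProd_mul_eq_cycProd_mul (h : ConsecColsProportional A) (hA : ∀ i j, A i j ≠ 0)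
    (j : Fin (n + 2)) :
    diagProd A * (A j (j - 1) * A (j - 1) j) = cycProd A * (A j j * A (j - 1) (j - 1)) := by
  set f : Fin (n + 2) → ℝ := fun l => A j l * A (l - 1) (l - 1)
  set g : Fin (n + 2) → ℝ := fun l => A j (l - 1) * A (l - 1) l
  have hf : ∏ l, f l = (∏ l, A j l) * diagProd A := by
    rw [prod_mul_distrib, prod_apply_sub_one_sub_one]
  have hg : ∏ l, g l = (∏ l, A j l) * cycProd A := by
    rw [prod_mul_distrib, prod_apply_sub_one_self]
    congr 1
    exact (Equiv.subRight 1).prod_comp fun l => A j l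
  have hfg : ∏ l ∈ {j}ᶜ, f l = ∏ l ∈ {j}ᶜ, g l := prod_congr rfl fun l hl => by
    have hlj : j ≠ l := fun h => by simp [h] at hl
    linear_combination h j (l - 1) l hlj (by simp)
  rw [Fintype.prod_eq_mul_prod_compl j f, hfg] at hf
  rw [Fintype.prod_eq_mul_prod_compl j g] at hg
  apply mul_left_cancel₀ (prod_ne_zero_iff.2 fun l _ => hA j l)
  linear_combination f j * hg - g j * hf

lemma mul_eq_mul_of_le (h : ConsecColsProportional A) (hA : ∀ i j, A i j ≠ 0)
    {x y k : Fin (n + 2)} (j : Fin (n + 2)) (hkj : k ≤ j)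
    (hx : x ≤ k ∨ j < x) (hy : y ≤ k ∨ j < y) : A x j * A y k = A y j * A x k := by
  induction j using Fin.induction with
  | zero => rw [Fin.le_zero_iff.1 hkj]; ring
  | succ j ih =>
    rcases hkj.eq_or_lt with rfl | hkj
    · ring
    have hout : ∀ z, (z ≤ k ∨ j.succ < z) → z ≠ j.succ ∧ (z ≤ k ∨ j.castSucc < z) := by
      rintro z (hz | hz)
      · exact ⟨(hz.trans_lt hkj).ne, Or.inl hz⟩
      · exact ⟨hz.ne', Or.inr (Fin.castSucc_lt_succ.trans hz)⟩
    obtain ⟨hxj, hx'⟩ := hout x hx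
    obtain ⟨hyj, hy'⟩ := hout y hy
    have hstep := h x y j.succ hxj hyj
    rw [sub_eq_iff_eq_add.2 (Fin.coeSucc_eq_succ (a := j)).symm] at hstep
    apply mul_right_cancel₀ (mul_ne_zero (hA x j.castSucc) (hA y j.castSucc))
    linear_combination (A x j.castSucc * A y k) * hstep +
      (A y j.succ * A x j.castSucc) * ih (Fin.le_castSucc_iff.2 hkj) hx' hy'

lemma invCyclic (h : ConsecColsProportional A) (hA : ∀ i j, A i j ≠ 0) : InvCyclic A := by
  set N := Fin.last (n + 1)
  refine ⟨fun i => hA i i, fun i k j hik hkj => ?_, fun i j hji hiN => ?_, fun j hjN => ?_⟩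
  · rw [eq_div_iff (hA k k)]
    linear_combination h.mul_eq_mul_of_le hA j hkj.le (Or.inl hik.le) (Or.inl le_rfl)
  · have hchain := h.mul_eq_mul_of_le hA j (Fin.zero_le j) (Or.inr hji)
      (Or.inr (hji.trans_le (Fin.le_last i)))
    have hwrap := h i N 0 ((Fin.zero_le j).trans_lt hji).ne' (by simp [N])
    rw [Fin.zero_sub_one_eq_last] at hwrap
    rw [eq_div_iff (hA N N)]
    apply mul_right_cancel₀ (hA N 0)
    linear_combination A N N * hchain + A N j * hwrap
  · rw [eq_div_iff (hA 0 0)]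
    linear_combination h.mul_eq_mul_of_le hA j (Fin.zero_le j) (Or.inr hjN) (Or.inl le_rfl)

lemma diag_mul_diag_mul_sub_eq_diagProd (h : ConsecColsProportional A) (hA : ∀ i j, A i j ≠ 0)
    {B : Matrix (Fin (n + 2)) (Fin (n + 2)) ℝ} (hAB : A * B = 1)
    (hB : SupportedOnCyclicBidiag B) (j : Fin (n + 2)) :
    B j j * A j j * (diagProd A - cycProd A) = diagProd A := by
  have hjj : A j j * B j j + A j (j - 1) * B (j - 1) j = 1 := by
    rw [← mul_apply_of_supportedOnCyclicBidiag hB, hAB, one_apply_eq]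
  have hpj : A (j - 1) j * B j j + A (j - 1) (j - 1) * B (j - 1) j = 0 := by
    rw [← mul_apply_of_supportedOnCyclicBidiag hB, hAB, one_apply_ne (by simp)]
  apply mul_right_cancel₀ (hA (j - 1) (j - 1))
  linear_combination diagProd A * A (j - 1) (j - 1) * hjj - diagProd A * A j (j - 1) * hpj
    + B j j * h.diagProd_mul_eq_cycProd_mul hA j

end ConsecColsProportional

lemma InvCyclic.mul_diag_sub_one {A : Matrix (Fin (n + 2)) (Fin (n + 2)) ℝ} (h : InvCyclic A)
    {i j : Fin (n + 2)} (hij : i ≠ j) :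
    A i j * A (j - 1) (j - 1) = A i (j - 1) * A (j - 1) j := by
  obtain ⟨hd, hup, hlow, hlast⟩ := h
  set N := Fin.last (n + 1)
  have hrow0 : ∀ p j, p < j → A 0 j * A p p = A 0 p * A p j := by
    intro p j hpj
    rcases (Fin.zero_le p).eq_or_lt with rfl | h0p
    · ring
    · rw [hup 0 p j h0p hpj]
      field_simp [hd p]
  have hrowN : ∀ p j, p < j → j < N → A N j * A p p = A N p * A p j := by
    intro p j hpj hjN
    rw [hlast j hjN, hlast p (hpj.trans hjN)]
    field_simp [hd 0]
    linear_combination A N 0 * hrow0 p j hpj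
  by_cases hj0 : j = 0
  · subst hj0
    rw [show (0 : Fin (n + 2)) - 1 = N from Fin.zero_sub_one_eq_last n]
    by_cases hiN : i = N
    · rw [hiN]; ring
    · rw [hlow i 0 (Fin.pos_of_ne_zero hij) hiN]
      field_simp [hd N]
  · have hj : (j : ℕ) ≠ 0 := Fin.val_ne_zero_iff.2 hj0
    have hpj : j - 1 < j := by
      rw [Fin.lt_def, Fin.val_sub_one_of_ne_zero hj0]; omega
    rcases lt_trichotomy i (j - 1) with hip | rfl | hpi
    · rw [hup i (j - 1) j hip hpj]
      field_simp [hd (j - 1)]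
    · ring
    · have hji : j < i := by
        rw [Fin.lt_def, Fin.val_sub_one_of_ne_zero hj0] at hpi
        rw [Fin.lt_def]
        have := Fin.val_ne_of_ne hij
        omega
      have hjN : j < N := hji.trans_le (Fin.le_last i)
      by_cases hiN : i = N
      · rw [hiN]
        exact hrowN _ _ hpj hjN
      · rw [hlow i j hji hiN, hlow i (j - 1) (hpj.trans hji) hiN]
        field_simp [hd N]
        linear_combination A i N * hrowN _ _ hpj hjN

lemma InvCyclic.consecColsProportional {A : Matrix (Fin (n + 2)) (Fin (n + 2)) ℝ}
    (h : InvCyclic A) : ConsecColsProportional A := by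
  intro x y j hx hy
  apply mul_right_cancel₀ (h.1 (j - 1))
  linear_combination A y (j - 1) * h.mul_diag_sub_one hx - A x (j - 1) * h.mul_diag_sub_one hy

noncomputable def cyclicInv (A : Matrix (Fin (n + 2)) (Fin (n + 2)) ℝ) :
    Matrix (Fin (n + 2)) (Fin (n + 2)) ℝ :=
  of fun i j =>
    if i = j then diagProd A / ((diagProd A - cycProd A) * A j j)
    else if i = j - 1 then
      -(diagProd A * A i j) / ((diagProd A - cycProd A) * (A i i * A j j))
    else 0

lemma cyclicInv_apply_self (A : Matrix (Fin (n + 2)) (Fin (n + 2)) ℝ) (j : Fin (n + 2)) :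
    cyclicInv A j j = diagProd A / ((diagProd A - cycProd A) * A j j) := by
  simp [cyclicInv]

lemma cyclicInv_apply_sub_one (A : Matrix (Fin (n + 2)) (Fin (n + 2)) ℝ) (j : Fin (n + 2)) :
    cyclicInv A (j - 1) j =
      -(diagProd A * A (j - 1) j) / ((diagProd A - cycProd A) * (A (j - 1) (j - 1) * A j j)) := by
  simp [cyclicInv]

lemma supportedOnCyclicBidiag_cyclicInv (A : Matrix (Fin (n + 2)) (Fin (n + 2)) ℝ) :
    SupportedOnCyclicBidiag (cyclicInv A) := fun k j hkj hk => by
  simp [cyclicInv, hkj, hk]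

lemma ConsecColsProportional.mul_cyclicInv {A : Matrix (Fin (n + 2)) (Fin (n + 2)) ℝ}
    (h : ConsecColsProportional A) (hA : ∀ i j, A i j ≠ 0)
    (hdc : diagProd A - cycProd A ≠ 0) : A * cyclicInv A = 1 := by
  ext i j
  rw [mul_apply_of_supportedOnCyclicBidiag (supportedOnCyclicBidiag_cyclicInv A),
    cyclicInv_apply_self, cyclicInv_apply_sub_one, one_apply]
  have := hA j j
  have := hA (j - 1) (j - 1)
  split_ifs with hij
  · subst hij
    field_simp
    linear_combination -h.diagProd_mul_eq_cycProd_mul hA i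
  · field_simp
    linear_combination diagProd A * h i (j - 1) j hij (by simp)

lemma diagProd_pos (hn : Even (n + 2)) {A : Matrix (Fin (n + 2)) (Fin (n + 2)) ℝ}
    (hA : ∀ i, A i i < 0) : 0 < diagProd A := by
  have h : diagProd A = ∏ i, -(-A i i) := by simp [diagProd]
  rw [h, prod_neg, card_univ, Fintype.card_fin, hn.neg_one_pow, one_mul]
  exact prod_pos fun i _ => neg_pos.2 (hA i)

lemma cyclicInv_apply_self_pos {A : Matrix (Fin (n + 2)) (Fin (n + 2)) ℝ}
    (hd : 0 < diagProd A) (hdc : diagProd A - cycProd A < 0) (hA : ∀ i, A i i < 0)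
    (j : Fin (n + 2)) : 0 < cyclicInv A j j := by
  rw [cyclicInv_apply_self]
  exact div_pos hd (mul_pos_of_neg_of_neg hdc (hA j))

lemma cyclicInv_apply_sub_one_neg {A : Matrix (Fin (n + 2)) (Fin (n + 2)) ℝ}
    (hd : 0 < diagProd A) (hdc : diagProd A - cycProd A < 0) (hA : ∀ i j, A i j < 0)
    (j : Fin (n + 2)) : cyclicInv A (j - 1) j < 0 := by
  rw [cyclicInv_apply_sub_one]
  exact div_neg_of_pos_of_neg (neg_pos.2 (mul_neg_of_pos_of_neg hd (hA _ _)))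
    (mul_neg_of_neg_of_pos hdc (mul_pos_of_neg_of_neg (hA _ _) (hA _ _)))

lemma invCyclic_of_inv_bdsw (hn : Even (n + 2)) {A : Matrix (Fin (n + 2)) (Fin (n + 2)) ℝ}
    (hdet : A.det ≠ 0) (hZ : ∀ i j, i ≠ j → A⁻¹ i j ≤ 0) (hneg : ∀ i j, A i j < 0)
    (hB : Bdsw A⁻¹) : InvCyclic A ∧ diagProd A - cycProd A < 0 := by
  obtain ⟨hdiag, hpred, hsupp⟩ := bdsw_iff.1 hB
  have hA : ∀ i j, A i j ≠ 0 := fun i j => (hneg i j).ne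
  have hAB : A * A⁻¹ = 1 := mul_nonsing_inv A (isUnit_iff_ne_zero.2 hdet)
  have hP := consecColsProportional_of_mul_eq_one hAB hsupp hdiag
  refine ⟨hP.invCyclic hA, ?_⟩
  have hpred_neg : A⁻¹ (0 - 1) 0 < 0 := (hZ _ _ (by simp)).lt_of_ne (hpred 0)
  have hcol : A (0 - 1) 0 * A⁻¹ 0 0 + A (0 - 1) (0 - 1) * A⁻¹ (0 - 1) 0 = 0 := by
    rw [← mul_apply_of_supportedOnCyclicBidiag hsupp, hAB, one_apply_ne (by simp)]
  have hdiag_pos : 0 < A⁻¹ 0 0 := by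
    nlinarith [hneg (0 - 1) 0, hneg (0 - 1) (0 - 1)]
  have hdiag_mul := hP.diag_mul_diag_mul_sub_eq_diagProd hA hAB hsupp 0
  nlinarith [diagProd_pos hn fun i => hneg i i, mul_neg_of_pos_of_neg hdiag_pos (hneg 0 0)]

lemma inv_bdsw_of_invCyclic (hn : Even (n + 2)) {A : Matrix (Fin (n + 2)) (Fin (n + 2)) ℝ}
    (hneg : ∀ i j, A i j < 0) (hIC : InvCyclic A) (hdc : diagProd A - cycProd A < 0) :
    A.det ≠ 0 ∧ (∀ i j, i ≠ j → A⁻¹ i j ≤ 0) ∧ Bdsw A⁻¹ := by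
  have hd := diagProd_pos hn fun i => hneg i i
  have hone := hIC.consecColsProportional.mul_cyclicInv (fun i j => (hneg i j).ne) hdc.ne
  rw [inv_eq_right_inv hone]
  refine ⟨(isUnit_det_of_right_inverse hone).ne_zero, fun i j hij => ?_, bdsw_iff.2
    ⟨fun j => (cyclicInv_apply_self_pos hd hdc (fun i => hneg i i) j).ne',
      fun j => (cyclicInv_apply_sub_one_neg hd hdc hneg j).ne,
      supportedOnCyclicBidiag_cyclicInv A⟩⟩
  by_cases hi : i = j - 1
  · rw [hi]
    exact (cyclicInv_apply_sub_one_neg hd hdc hneg j).le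
  · rw [supportedOnCyclicBidiag_cyclicInv A i j hij hi]

theorem stmt11 {n : ℕ} (hn : Even (n + 2)) (A : Matrix (Fin (n + 2)) (Fin (n + 2)) ℝ) :
    -- `A` is an inverse `N`-matrix (i.e. `A⁻¹` is a nonsingular `Z`-matrix whose
    -- inverse `A` is entrywise negative) such that `A⁻¹` has the bdsw structure
    (A.det ≠ 0 ∧ (∀ i j, i ≠ j → A⁻¹ i j ≤ 0) ∧ (∀ i j, A i j < 0) ∧ Bdsw A⁻¹) ↔
    ((∀ i j, A i j < 0) ∧ InvCyclic A ∧ diagProd A - cycProd A < 0) := by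
  constructor
  · rintro ⟨hdet, hZ, hneg, hB⟩
    exact ⟨hneg, invCyclic_of_inv_bdsw hn hdet hZ hneg hB⟩
  · rintro ⟨hneg, hIC, hdc⟩
    obtain ⟨hdet, hZ, hB⟩ := inv_bdsw_of_invCyclic hn hneg hIC hdc
    exact ⟨hdet, hZ, hneg, hB⟩
end
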